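/- arXiv:2101.11542 — 6 statements merged into one kernel-verified Lean document; each statement's English description precedes it below -/
import Mathlib

section
/- Let m be a positive integer, R ⊆ {0,1,…,m−1}, and let A⁺ be the set of integers a ≥ m with (a mod m) ∈ R. Then for every natural number n, the number p_{A⁺}(n) of partitions of n with all parts in A⁺ satisfies log p_{A⁺}(n) ≤ π · √(2·n·|R| / (3·m)). -/
/-- `partitionsIn S n` is the number of partitions of `n` with all parts in `S`. -/
noncomputable def partitionsIn (S : Set ℕ) (n : ℕ) : ℕ :=
  Nat.card {p : n.Partition // ∀ a ∈ p.parts, a ∈ S}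

open Finset Real

set_option maxHeartbeats 1000000 in
lemma lemA' (S : Set ℕ) (n : ℕ) (T : Finset ℕ)
    (hTmem : ∀ a : ℕ, a ∈ T ↔ (1 ≤ a ∧ a ≤ n) ∧ a ∈ S)
    (x : ℝ) (hx0 : 0 ≤ x) (hx1 : x < 1) :
    (partitionsIn S n : ℝ) * x ^ n ≤ ∏ a ∈ T, (1 - x ^ a)⁻¹ := by
  classical
  have hmem : ∀ (p : n.Partition), (∀ a ∈ p.parts, a ∈ S) → ∀ a ∈ p.parts, a ∈ T := by
    intro p hp a ha
    rw [hTmem]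
    exact ⟨⟨p.parts_pos ha,
      (Multiset.single_le_sum (fun y _ => Nat.zero_le y) a ha).trans p.parts_sum.le⟩, hp a ha⟩
  have hsum : ∀ (p : n.Partition), (∀ a ∈ p.parts, a ∈ T) →
      ∑ a ∈ T, a * p.parts.count a = n := by
    intro p hp
    have h1 : p.parts.toFinset ⊆ T := fun a ha => hp a (Multiset.mem_toFinset.mp ha)
    have h2 : ∑ a ∈ p.parts.toFinset, a * p.parts.count a = n := by
      conv_rhs => rw [← p.parts_sum]
      rw [Finset.sum_multiset_count]
      exact Finset.sum_congr rfl fun a _ => by rw [smul_eq_mul, mul_comm]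
    rw [← Finset.sum_subset h1 (fun a _ ha => by
      rw [Multiset.count_eq_zero_of_notMem (fun h => ha (Multiset.mem_toFinset.mpr h)),
        mul_zero])]
    exact h2
  have hcnt : ∀ (p : n.Partition), (∀ a ∈ p.parts, a ∈ T) →
      ∀ a ∈ T, p.parts.count a ≤ n := by
    intro p hp a ha
    have h1 : a * p.parts.count a ≤ ∑ a ∈ T, a * p.parts.count a :=
      Finset.single_le_sum (f := fun i => i * p.parts.count i) (fun i _ => Nat.zero_le _) ha
    rw [hsum p hp] at h1
    have ha1 : 1 ≤ a := ((hTmem a).mp ha).1.1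
    calc p.parts.count a ≤ a * p.parts.count a := Nat.le_mul_of_pos_left _ ha1
      _ ≤ n := h1
  have hcard : (partitionsIn S n : ℝ) =
      ∑ _p : {p : n.Partition // ∀ a ∈ p.parts, a ∈ S}, (1 : ℝ) := by
    simp [partitionsIn, Nat.card_eq_fintype_card]
  have hxn : ∀ p : {p : n.Partition // ∀ a ∈ p.parts, a ∈ S},
      x ^ n = ∏ a : T, (x ^ (a : ℕ)) ^ (p.1.parts.count (a : ℕ)) := by
    intro p
    have hp := hmem p.1 p.2
    rw [Finset.prod_coe_sort T (fun a => (x ^ a) ^ (p.1.parts.count a))]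
    calc x ^ n = x ^ (∑ a ∈ T, a * p.1.parts.count a) := by rw [hsum p.1 hp]
      _ = ∏ a ∈ T, x ^ (a * p.1.parts.count a) := (Finset.prod_pow_eq_pow_sum T _ x).symm
      _ = ∏ a ∈ T, (x ^ a) ^ (p.1.parts.count a) :=
          Finset.prod_congr rfl fun a _ => by rw [pow_mul]
  have hFinj : Function.Injective
      (fun (p : {p : n.Partition // ∀ a ∈ p.parts, a ∈ S}) (a : T) =>
        p.1.parts.count (a : ℕ)) := by
    intro p q h
    apply Subtype.ext
    apply Nat.Partition.ext
    ext a
    by_cases ha : a ∈ T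
    · exact congrFun h ⟨a, ha⟩
    · rw [Multiset.count_eq_zero_of_notMem (fun hc => ha (hmem p.1 p.2 a hc)),
        Multiset.count_eq_zero_of_notMem (fun hc => ha (hmem q.1 q.2 a hc))]
  have himg : (Finset.univ.image
        (fun (p : {p : n.Partition // ∀ a ∈ p.parts, a ∈ S}) (a : T) =>
          p.1.parts.count (a : ℕ)))
      ⊆ Fintype.piFinset (fun _ : T => Finset.range (n + 1)) := by
    intro f hf
    rw [Finset.mem_image] at hf
    obtain ⟨p, _, rfl⟩ := hf
    rw [Fintype.mem_piFinset]
    intro a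
    rw [Finset.mem_range]
    exact Nat.lt_succ_of_le (hcnt p.1 (hmem p.1 p.2) (a : ℕ) a.2)
  calc (partitionsIn S n : ℝ) * x ^ n
      = ∑ _p : {p : n.Partition // ∀ a ∈ p.parts, a ∈ S}, x ^ n := by
        rw [hcard, Finset.sum_const, Finset.sum_const]
        simp
    _ = ∑ p : {p : n.Partition // ∀ a ∈ p.parts, a ∈ S},
          ∏ a : T, (x ^ (a : ℕ)) ^ (p.1.parts.count (a : ℕ)) :=
        Finset.sum_congr rfl fun p _ => hxn p
    _ = ∑ f ∈ Finset.univ.image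
          (fun (p : {p : n.Partition // ∀ a ∈ p.parts, a ∈ S}) (a : T) =>
            p.1.parts.count (a : ℕ)),
          ∏ a : T, (x ^ (a : ℕ)) ^ (f a) :=
        by rw [Finset.sum_image (fun p _ q _ h => hFinj h)]
    _ ≤ ∑ f ∈ Fintype.piFinset (fun _ : T => Finset.range (n + 1)),
          ∏ a : T, (x ^ (a : ℕ)) ^ (f a) := by
        apply Finset.sum_le_sum_of_subset_of_nonneg himg
        intro f _ _
        exact Finset.prod_nonneg fun a _ => pow_nonneg (pow_nonneg hx0 _) _
    _ = ∏ a : T, ∑ j ∈ Finset.range (n + 1), (x ^ (a : ℕ)) ^ j :=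
        (Finset.prod_univ_sum _ _).symm
    _ ≤ ∏ a : T, (1 - x ^ (a : ℕ))⁻¹ := by
        apply Finset.prod_le_prod
        · intro a _
          exact Finset.sum_nonneg fun j _ => pow_nonneg (pow_nonneg hx0 _) _
        · intro a _
          have ha1 : (a : ℕ) ≠ 0 := by
            have := ((hTmem (a : ℕ)).mp a.2).1.1; omega
          have hxa0 : (0:ℝ) ≤ x ^ (a : ℕ) := pow_nonneg hx0 _
          have hxa1 : x ^ (a : ℕ) < 1 := pow_lt_one₀ hx0 hx1 ha1
          calc ∑ j ∈ Finset.range (n + 1), (x ^ (a : ℕ)) ^ j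
              ≤ ∑' j : ℕ, (x ^ (a : ℕ)) ^ j :=
                Summable.sum_le_tsum _ (fun j _ => pow_nonneg hxa0 j)
                  (summable_geometric_of_lt_one hxa0 hxa1)
            _ = (1 - x ^ (a : ℕ))⁻¹ := tsum_geometric_of_lt_one hxa0 hxa1
    _ = ∏ a ∈ T, (1 - x ^ a)⁻¹ := Finset.prod_coe_sort T (fun a => (1 - x ^ a)⁻¹)

lemma geom_Icc_le (z : ℝ) (hz0 : 0 ≤ z) (hz1 : z < 1) (N : ℕ) :
    ∑ j ∈ Finset.Icc 1 N, z ^ j ≤ z * (1 - z)⁻¹ := by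
  rw [← Finset.Ico_add_one_right_eq_Icc, Finset.sum_Ico_eq_sum_range]
  calc ∑ j ∈ Finset.range N, z ^ (1 + j)
      = z * ∑ j ∈ Finset.range N, z ^ j := by
        rw [Finset.mul_sum]
        exact Finset.sum_congr rfl fun j _ => by rw [pow_add, pow_one]
    _ ≤ z * (1 - z)⁻¹ := by
        apply mul_le_mul_of_nonneg_left _ hz0
        calc ∑ j ∈ Finset.range N, z ^ j ≤ ∑' j : ℕ, z ^ j :=
              Summable.sum_le_tsum _ (fun j _ => pow_nonneg hz0 j)
                (summable_geometric_of_lt_one hz0 hz1)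
          _ = (1 - z)⁻¹ := tsum_geometric_of_lt_one hz0 hz1

lemma exp_ratio_le (u : ℝ) (hu : 0 < u) :
    Real.exp (-u) * (1 - Real.exp (-u))⁻¹ ≤ 1 / u := by
  have hE : u + 1 ≤ Real.exp u := Real.add_one_le_exp u
  have hz0 : (0:ℝ) < Real.exp (-u) := Real.exp_pos _
  have hz1 : Real.exp (-u) < 1 := Real.exp_lt_one_iff.mpr (by linarith)
  have hzE : Real.exp (-u) * Real.exp u = 1 := by rw [← Real.exp_add]; simp
  rw [← div_eq_mul_inv, div_le_div_iff₀ (by linarith) hu]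
  nlinarith [mul_nonneg hz0.le (sub_nonneg.mpr hE)]

lemma basel_shift : ∑' k : ℕ, 1 / ((k : ℝ) + 1) ^ 2 = Real.pi ^ 2 / 6 := by
  have h0 : HasSum (fun n : ℕ => 1 / (n : ℝ) ^ 2)
      (Real.pi ^ 2 / 6 + ∑ i ∈ Finset.range 1, 1 / (i : ℝ) ^ 2) := by
    simpa using hasSum_zeta_two
  have h2 : HasSum (fun n : ℕ => 1 / ((n + 1 : ℕ) : ℝ) ^ 2) (Real.pi ^ 2 / 6) :=
    (hasSum_nat_add_iff (f := fun n : ℕ => 1 / (n : ℝ) ^ 2) 1).mpr h0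
  have h3 : HasSum (fun n : ℕ => 1 / ((n : ℝ) + 1) ^ 2) (Real.pi ^ 2 / 6) := by
    convert h2 using 2 with n
    push_cast
    ring
  exact h3.tsum_eq

lemma basel_shift_summable : Summable (fun k : ℕ => 1 / ((k : ℝ) + 1) ^ 2) := by
  have hbase : Summable (fun n : ℕ => 1 / (n : ℝ) ^ 2) :=
    Real.summable_one_div_nat_pow.mpr (by norm_num)
  have := (summable_nat_add_iff 1).mpr hbase
  refine this.congr fun n => ?_
  push_cast
  ring

lemma lemD (t' : ℝ) (ht' : 0 < t') (N : ℕ) :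
    ∑ j ∈ Finset.Icc 1 N, -Real.log (1 - Real.exp (-(t' * j))) ≤
      Real.pi ^ 2 / 6 / t' := by
  have hterm : ∀ j : ℕ, 1 ≤ j →
      HasSum (fun k : ℕ => Real.exp (-(t' * j)) ^ (k + 1) / (k + 1))
        (-Real.log (1 - Real.exp (-(t' * j)))) := by
    intro j hj
    apply Real.hasSum_pow_div_log_of_abs_lt_one
    rw [abs_of_nonneg (Real.exp_pos _).le]
    apply Real.exp_lt_one_iff.mpr
    have h1 : (1:ℝ) ≤ (j:ℝ) := by exact_mod_cast hj
    nlinarith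
  have hsummable : ∀ j ∈ Finset.Icc 1 N,
      Summable (fun k : ℕ => Real.exp (-(t' * j)) ^ (k + 1) / (k + 1)) :=
    fun j hj => (hterm j (Finset.mem_Icc.mp hj).1).summable
  have h1 : ∑ j ∈ Finset.Icc 1 N, -Real.log (1 - Real.exp (-(t' * j)))
      = ∑' k : ℕ, ∑ j ∈ Finset.Icc 1 N, Real.exp (-(t' * j)) ^ (k + 1) / (k + 1) := by
    rw [Summable.tsum_finsetSum hsummable]
    exact Finset.sum_congr rfl fun j hj => ((hterm j (Finset.mem_Icc.mp hj).1).tsum_eq).symm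
  rw [h1]
  have hre : ∀ k j : ℕ, Real.exp (-(t' * j)) ^ (k + 1) / ((k:ℝ) + 1)
      = Real.exp (-(t' * ((k:ℝ) + 1))) ^ j / ((k:ℝ) + 1) := by
    intro k j
    congr 1
    rw [← Real.exp_nat_mul, ← Real.exp_nat_mul]
    congr 1
    push_cast
    ring
  have hk1 : ∀ k : ℕ, (0:ℝ) < (k:ℝ) + 1 := fun k => by positivity
  have hbound : ∀ k : ℕ, ∑ j ∈ Finset.Icc 1 N, Real.exp (-(t' * j)) ^ (k + 1) / (k + 1)
      ≤ 1 / t' * (1 / ((k:ℝ) + 1) ^ 2) := by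
    intro k
    have hu : (0:ℝ) < t' * ((k:ℝ) + 1) := by positivity
    have hz0 : (0:ℝ) < Real.exp (-(t' * ((k:ℝ) + 1))) := Real.exp_pos _
    have hz1 : Real.exp (-(t' * ((k:ℝ) + 1))) < 1 := Real.exp_lt_one_iff.mpr (by linarith)
    calc ∑ j ∈ Finset.Icc 1 N, Real.exp (-(t' * j)) ^ (k + 1) / (k + 1)
        = (∑ j ∈ Finset.Icc 1 N, Real.exp (-(t' * ((k:ℝ) + 1))) ^ j) / ((k:ℝ) + 1) := by
          rw [Finset.sum_div]
          exact Finset.sum_congr rfl fun j _ => hre k j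
      _ ≤ (Real.exp (-(t' * ((k:ℝ) + 1))) * (1 - Real.exp (-(t' * ((k:ℝ) + 1))))⁻¹) /
            ((k:ℝ) + 1) := by
          gcongr
          exact geom_Icc_le _ hz0.le hz1 N
      _ ≤ (1 / (t' * ((k:ℝ) + 1))) / ((k:ℝ) + 1) := by
          gcongr
          exact exp_ratio_le _ hu
      _ = 1 / t' * (1 / ((k:ℝ) + 1) ^ 2) := by
          field_simp
  have hsum2 : Summable (fun k : ℕ => 1 / t' * (1 / ((k:ℝ) + 1) ^ 2)) :=
    basel_shift_summable.mul_left _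
  have hsum1 : Summable (fun k : ℕ =>
      ∑ j ∈ Finset.Icc 1 N, Real.exp (-(t' * j)) ^ (k + 1) / (k + 1)) := by
    apply Summable.of_nonneg_of_le ?_ hbound hsum2
    intro k
    exact Finset.sum_nonneg fun j _ => by positivity
  calc ∑' k : ℕ, ∑ j ∈ Finset.Icc 1 N, Real.exp (-(t' * j)) ^ (k + 1) / (k + 1)
      ≤ ∑' k : ℕ, 1 / t' * (1 / ((k:ℝ) + 1) ^ 2) := Summable.tsum_le_tsum hbound hsum1 hsum2
    _ = 1 / t' * ∑' k : ℕ, 1 / ((k:ℝ) + 1) ^ 2 := tsum_mul_left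
    _ = Real.pi ^ 2 / 6 / t' := by rw [basel_shift]; ring

lemma lemC (m : ℕ) (hm : 0 < m) (R : Finset ℕ) (n : ℕ)
    (T : Finset ℕ) (hTmem : ∀ a : ℕ, a ∈ T ↔ (1 ≤ a ∧ a ≤ n) ∧ (m ≤ a ∧ a % m ∈ R))
    (t : ℝ) (ht : 0 < t) :
    ∑ a ∈ T, -Real.log (1 - Real.exp (-(t * a))) ≤
      R.card * (Real.pi ^ 2 / 6 / (t * m)) := by
  classical
  have hm' : (0:ℝ) < m := by exact_mod_cast hm
  -- nonnegativity and monotonicity facts about g j := -log (1 - exp (-(t*m*j)))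
  have hgpos : ∀ j : ℕ, 1 ≤ j → (0:ℝ) < 1 - Real.exp (-(t * m * j)) := by
    intro j hj
    have h1 : (1:ℝ) ≤ (j:ℝ) := by exact_mod_cast hj
    have : (0:ℝ) < t * m * j := by positivity
    have := Real.exp_lt_one_iff.mpr (by linarith : -(t * m * j) < 0)
    linarith
  have hgnonneg : ∀ j : ℕ, 1 ≤ j → 0 ≤ -Real.log (1 - Real.exp (-(t * m * j))) := by
    intro j hj
    have h1 := hgpos j hj
    have h2 : 1 - Real.exp (-(t * m * (j:ℝ))) ≤ 1 := by
      have := (Real.exp_pos (-(t * m * (j:ℝ)))).le; linarith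
    have := Real.log_nonpos (by linarith) h2
    linarith
  -- step 1: termwise bound f a ≤ g (a / m)
  have hstep1 : ∀ a ∈ T, -Real.log (1 - Real.exp (-(t * a))) ≤
      -Real.log (1 - Real.exp (-(t * m * (a / m : ℕ)))) := by
    intro a ha
    obtain ⟨⟨ha1, han⟩, ham, har⟩ := (hTmem a).mp ha
    have hj1 : 1 ≤ a / m := (Nat.one_le_div_iff hm).mpr ham
    have hma : (m * (a / m) : ℕ) ≤ a := Nat.mul_div_le a m
    have hcast : (t * m * (a / m : ℕ)) ≤ t * a := by
      have : ((m * (a / m) : ℕ) : ℝ) ≤ (a : ℝ) := by exact_mod_cast hma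
      push_cast at this
      nlinarith
    have hle : Real.exp (-(t * a)) ≤ Real.exp (-(t * m * (a / m : ℕ))) :=
      Real.exp_le_exp.mpr (by linarith)
    have hpos2 := hgpos (a / m) hj1
    have hpos1 : (0:ℝ) < 1 - Real.exp (-(t * m * ((a / m : ℕ) : ℝ))) := hpos2
    have hlog := Real.log_le_log (by linarith) (by linarith :
      1 - Real.exp (-(t * m * ((a / m : ℕ) : ℝ))) ≤ 1 - Real.exp (-(t * (a:ℝ))))
    linarith
  -- step 2: reindex by (a % m, a / m)
  have hstep2 : ∑ a ∈ T, -Real.log (1 - Real.exp (-(t * m * (a / m : ℕ)))) ≤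
      ∑ q ∈ R ×ˢ Finset.Icc 1 (n / m), -Real.log (1 - Real.exp (-(t * m * (q.2 : ℕ)))) := by
    have himage := Finset.sum_image
      (f := fun q : ℕ × ℕ => -Real.log (1 - Real.exp (-(t * m * (q.2 : ℕ)))))
      (g := fun a : ℕ => (a % m, a / m)) (s := T)
      (fun a _ b _ h => by
        have h' : (a % m, a / m) = (b % m, b / m) := h
        have h1 : a % m = b % m := congrArg Prod.fst h'
        have h2 : a / m = b / m := congrArg Prod.snd h'
        calc a = m * (a / m) + a % m := (Nat.div_add_mod a m).symm
          _ = m * (b / m) + b % m := by rw [h1, h2]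
          _ = b := Nat.div_add_mod b m)
    rw [← himage]
    apply Finset.sum_le_sum_of_subset_of_nonneg
    · intro q hq
      rw [Finset.mem_image] at hq
      obtain ⟨a, ha, rfl⟩ := hq
      obtain ⟨⟨ha1, han⟩, ham, har⟩ := (hTmem a).mp ha
      rw [Finset.mem_product, Finset.mem_Icc]
      exact ⟨har, (Nat.one_le_div_iff hm).mpr ham, Nat.div_le_div_right han⟩
    · intro q hq _
      rw [Finset.mem_product, Finset.mem_Icc] at hq
      exact hgnonneg q.2 hq.2.1
  -- step 3: evaluate product sum and apply lemD
  calc ∑ a ∈ T, -Real.log (1 - Real.exp (-(t * a)))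
      ≤ ∑ a ∈ T, -Real.log (1 - Real.exp (-(t * m * (a / m : ℕ)))) :=
        Finset.sum_le_sum hstep1
    _ ≤ ∑ q ∈ R ×ˢ Finset.Icc 1 (n / m),
          -Real.log (1 - Real.exp (-(t * m * (q.2 : ℕ)))) := hstep2
    _ = R.card * ∑ j ∈ Finset.Icc 1 (n / m), -Real.log (1 - Real.exp (-(t * m * j))) := by
        rw [Finset.sum_product]
        simp [Finset.sum_const, nsmul_eq_mul]
    _ ≤ R.card * (Real.pi ^ 2 / 6 / (t * m)) := by
        apply mul_le_mul_of_nonneg_left (lemD (t * m) (by positivity) (n / m))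
        positivity

lemma lemMain (m : ℕ) (hm : 0 < m) (R : Finset ℕ) (n : ℕ) (t : ℝ) (ht : 0 < t) :
    Real.log (partitionsIn {a : ℕ | m ≤ a ∧ a % m ∈ R} n) ≤
      t * n + R.card * (Real.pi ^ 2 / 6 / (t * m)) := by
  classical
  have hm' : (0:ℝ) < m := by exact_mod_cast hm
  by_cases hp : partitionsIn {a : ℕ | m ≤ a ∧ a % m ∈ R} n = 0
  · rw [hp]
    simp only [Nat.cast_zero, Real.log_zero]
    positivity
  have hp1 : (1:ℝ) ≤ (partitionsIn {a : ℕ | m ≤ a ∧ a % m ∈ R} n : ℝ) := by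
    exact_mod_cast Nat.one_le_iff_ne_zero.mpr hp
  set T := (Finset.Icc 1 n).filter (fun a => m ≤ a ∧ a % m ∈ R) with hT
  have hTmem : ∀ a : ℕ, a ∈ T ↔ (1 ≤ a ∧ a ≤ n) ∧ (m ≤ a ∧ a % m ∈ R) := by
    intro a
    rw [hT, Finset.mem_filter, Finset.mem_Icc]
  have hx0 : (0:ℝ) ≤ Real.exp (-t) := (Real.exp_pos _).le
  have hx1 : Real.exp (-t) < 1 := Real.exp_lt_one_iff.mpr (by linarith)
  have hA := lemA' {a : ℕ | m ≤ a ∧ a % m ∈ R} n T hTmem _ hx0 hx1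
  have hfac : ∀ a ∈ T, 0 < 1 - Real.exp (-t) ^ a := by
    intro a ha
    have ha1 : a ≠ 0 := by have := ((hTmem a).mp ha).1.1; omega
    have := pow_lt_one₀ hx0 hx1 ha1
    linarith
  have hlhspos : 0 < (partitionsIn {a : ℕ | m ≤ a ∧ a % m ∈ R} n : ℝ) * Real.exp (-t) ^ n :=
    mul_pos (by linarith) (pow_pos (Real.exp_pos _) n)
  have hlog1 : Real.log ((partitionsIn {a : ℕ | m ≤ a ∧ a % m ∈ R} n : ℝ) *
      Real.exp (-t) ^ n) ≤ Real.log (∏ a ∈ T, (1 - Real.exp (-t) ^ a)⁻¹) :=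
    Real.log_le_log hlhspos hA
  rw [Real.log_mul (by linarith) (ne_of_gt (pow_pos (Real.exp_pos _) n)),
    Real.log_pow, Real.log_exp] at hlog1
  have hlog2 : Real.log (∏ a ∈ T, (1 - Real.exp (-t) ^ a)⁻¹)
      = ∑ a ∈ T, -Real.log (1 - Real.exp (-(t * a))) := by
    rw [Real.log_prod (fun a ha => ne_of_gt (inv_pos.mpr (hfac a ha)))]
    refine Finset.sum_congr rfl fun a ha => ?_
    rw [Real.log_inv]
    congr 2
    rw [← Real.exp_nat_mul]
    congr 1
    ring
  rw [hlog2] at hlog1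
  have hC := lemC m hm R n T hTmem t ht
  have : (n : ℝ) * (-t) = -(t * n) := by ring
  linarith

theorem stmt_0 (m : ℕ) (hm : 0 < m) (R : Finset ℕ) (hR : R ⊆ Finset.range m)
    (Aplus : Set ℕ) (hA : Aplus = {a : ℕ | m ≤ a ∧ a % m ∈ R}) (n : ℕ) :
    Real.log (partitionsIn Aplus n) ≤
      Real.pi * Real.sqrt (2 * n * R.card / (3 * m)) := by
  subst hA
  have hm' : (0:ℝ) < m := by exact_mod_cast hm
  by_cases hp : partitionsIn {a : ℕ | m ≤ a ∧ a % m ∈ R} n = 0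
  · rw [hp]
    simp only [Nat.cast_zero, Real.log_zero]
    exact mul_nonneg Real.pi_pos.le (Real.sqrt_nonneg _)
  obtain ⟨⟨p0⟩, hfin⟩ := Nat.card_ne_zero.mp hp
  by_cases hn : n = 0
  · subst hn
    have hsub : Subsingleton {p : Nat.Partition 0 // ∀ a ∈ p.parts,
        a ∈ {a : ℕ | m ≤ a ∧ a % m ∈ R}} := by
      constructor
      intro p q
      apply Subtype.ext
      apply Nat.Partition.ext
      have hz : ∀ r : Nat.Partition 0, r.parts = 0 := by
        intro r
        by_contra h
        obtain ⟨a, ha⟩ := Multiset.exists_mem_of_ne_zero h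
        have h1 := r.parts_pos ha
        have h2 := Multiset.single_le_sum (fun y _ => Nat.zero_le y) a ha
        rw [r.parts_sum] at h2
        omega
      rw [hz, hz]
    have h1 : partitionsIn {a : ℕ | m ≤ a ∧ a % m ∈ R} 0 = 1 := by
      haveI := hsub
      haveI : Nonempty {p : Nat.Partition 0 // ∀ a ∈ p.parts,
          a ∈ {a : ℕ | m ≤ a ∧ a % m ∈ R}} := ⟨p0⟩
      exact Nat.card_unique
    rw [h1]
    simp only [Nat.cast_one, Real.log_one]
    exact mul_nonneg Real.pi_pos.le (Real.sqrt_nonneg _)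
  -- R is nonempty
  have hRne : 0 < R.card := by
    have hne : p0.1.parts ≠ 0 := by
      intro h
      apply hn
      rw [← p0.1.parts_sum, h, Multiset.sum_zero]
    obtain ⟨a, ha⟩ := Multiset.exists_mem_of_ne_zero hne
    have := p0.2 a ha
    exact Finset.card_pos.mpr ⟨a % m, this.2⟩
  have hc : (0:ℝ) < R.card := by exact_mod_cast hRne
  have hn' : (0:ℝ) < n := by
    have : 0 < n := Nat.pos_of_ne_zero hn
    exact_mod_cast this
  set c : ℝ := (R.card : ℝ) with hcdef
  set s : ℝ := Real.sqrt (c / (6 * m * n)) with hsdef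
  have hspos : 0 < s := Real.sqrt_pos.mpr (by positivity)
  have hs2 : s ^ 2 = c / (6 * m * n) := Real.sq_sqrt (by positivity : (0:ℝ) ≤ c / (6 * m * n))
  have ht : 0 < Real.pi * s := mul_pos Real.pi_pos hspos
  refine (lemMain m hm R n (Real.pi * s) ht).trans ?_
  have hkey : c / (6 * m * s) = s * n := by
    rw [eq_comm, eq_div_iff (by positivity : (6:ℝ) * m * s ≠ 0)]
    have h1 : s * n * (6 * m * s) = 6 * m * n * s ^ 2 := by ring
    rw [h1, hs2]
    field_simp
  have heq : Real.pi * s * n + c * (Real.pi ^ 2 / 6 / (Real.pi * s * m))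
      = Real.pi * (s * n) + Real.pi * (c / (6 * m * s)) := by
    rw [div_div, div_eq_mul_inv]
    field_simp
  rw [heq, hkey]
  have h2 : (2 * (s * n)) ^ 2 = 2 * n * c / (3 * m) := by
    have h3 : (2 * (s * n)) ^ 2 = 4 * s ^ 2 * n ^ 2 := by ring
    rw [h3, hs2]
    field_simp
    ring
  rw [← h2, Real.sqrt_sq (by positivity : (0:ℝ) ≤ 2 * (s * n))]
  linarith
end

section
/- For every positive integer n, the partition function p(n) (the number of partitions of n into positive integers) satisfies log p(n) ≤ π · √(2n/3). -/
open Finset Real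


lemma count_mul_sum (n : ℕ) (P : Nat.Partition n) :
    ∑ i : Fin n, ((i : ℕ) + 1) * P.parts.count ((i : ℕ) + 1) = n := by
  have hsub : P.parts.toFinset ⊆ Finset.Icc 1 n := by
    intro a ha
    rw [Multiset.mem_toFinset] at ha
    refine Finset.mem_Icc.2 ⟨P.parts_pos ha, ?_⟩
    calc a ≤ P.parts.sum := Multiset.single_le_sum (fun b _ => Nat.zero_le b) _ ha
    _ = n := P.parts_sum
  have h1 : ∑ a ∈ P.parts.toFinset, P.parts.count a * a = n := by
    conv_rhs => rw [← P.parts_sum, ← Multiset.toFinset_sum_count_nsmul_eq P.parts]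
    rw [Multiset.sum_sum]
    simp [Multiset.sum_nsmul]
  have h2 : ∑ a ∈ Finset.Icc 1 n, P.parts.count a * a = n :=
    (Finset.sum_subset hsub (fun a _ ha => by
      simp [Multiset.count_eq_zero_of_notMem
        (fun h => ha (Multiset.mem_toFinset.2 h))])).symm.trans h1
  calc ∑ i : Fin n, ((i : ℕ) + 1) * P.parts.count ((i : ℕ) + 1)
      = ∑ i ∈ Finset.range n, (i + 1) * P.parts.count (i + 1) :=
        Fin.sum_univ_eq_sum_range (fun i => (i + 1) * P.parts.count (i + 1)) n
    _ = ∑ a ∈ Finset.Icc 1 n, P.parts.count a * a := by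
        rw [show Finset.Icc 1 n = Finset.Ico 1 (n + 1) by rfl, Finset.sum_Ico_eq_sum_range]
        simp only [Nat.add_sub_cancel]
        exact Finset.sum_congr rfl fun i _ => by ring_nf
    _ = n := h2

open Finset Real

lemma phi_inj (n : ℕ) : Function.Injective
    (fun (P : Nat.Partition n) (i : Fin n) => P.parts.count ((i : ℕ) + 1)) := by
  intro P Q h
  have key : ∀ a, P.parts.count a = Q.parts.count a := by
    intro a
    by_cases ha : a ∈ Finset.Icc 1 n
    · obtain ⟨h1, h2⟩ := Finset.mem_Icc.1 ha
      have hlt : a - 1 < n := by omega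
      have := congrFun h ⟨a - 1, hlt⟩
      simpa [Nat.sub_add_cancel h1] using this
    · have hP : a ∉ P.parts := by
        intro hm
        exact ha (Finset.mem_Icc.2 ⟨P.parts_pos hm,
          P.parts_sum ▸ Multiset.single_le_sum (fun b _ => Nat.zero_le b) _ hm⟩)
      have hQ : a ∉ Q.parts := by
        intro hm
        exact ha (Finset.mem_Icc.2 ⟨Q.parts_pos hm,
          Q.parts_sum ▸ Multiset.single_le_sum (fun b _ => Nat.zero_le b) _ hm⟩)
      rw [Multiset.count_eq_zero_of_notMem hP, Multiset.count_eq_zero_of_notMem hQ]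
  have : P.parts = Q.parts := Multiset.ext.2 key
  cases P; cases Q; simpa using this

lemma cardA (n : ℕ) (x : ℝ) (hx0 : 0 < x) (hx1 : x < 1) :
    (Fintype.card (Nat.Partition n) : ℝ) * x ^ n ≤ ∏ i : Fin n, (1 - x ^ ((i : ℕ) + 1))⁻¹ := by
  set φ := fun (P : Nat.Partition n) (i : Fin n) => P.parts.count ((i : ℕ) + 1) with hφ
  have hxk : ∀ k : ℕ, 0 < 1 - x ^ (k + 1) := fun k =>
    sub_pos.2 (pow_lt_one₀ hx0.le hx1 (Nat.succ_ne_zero k))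
  -- step 1 : card * x^n ≤ sum over piFinset
  have hmem : ∀ P : Nat.Partition n,
      φ P ∈ Fintype.piFinset (fun _ : Fin n => Finset.range (n + 1)) := by
    intro P
    rw [Fintype.mem_piFinset]
    intro i
    simp only [hφ]
    rw [Finset.mem_range]
    have := count_mul_sum n P
    have hle : ((i : ℕ) + 1) * P.parts.count ((i : ℕ) + 1) ≤ n := by
      exact le_of_le_of_eq (Finset.single_le_sum (f := fun i : Fin n => ((i : ℕ) + 1) * P.parts.count ((i : ℕ) + 1)) (fun j _ => Nat.zero_le _) (Finset.mem_univ i)) this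
    have h5 : P.parts.count ((i : ℕ) + 1) ≤ n :=
      le_trans (Nat.le_mul_of_pos_left _ (Nat.succ_pos _)) hle
    omega
  have step1 : (Fintype.card (Nat.Partition n) : ℝ) * x ^ n ≤
      ∑ p ∈ Fintype.piFinset (fun _ : Fin n => Finset.range (n + 1)),
        ∏ i : Fin n, x ^ (((i : ℕ) + 1) * p i) := by
    have himg : (Finset.univ : Finset (Nat.Partition n)).image φ ⊆
        Fintype.piFinset (fun _ : Fin n => Finset.range (n + 1)) := by
      intro p hp
      obtain ⟨P, _, rfl⟩ := Finset.mem_image.1 hp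
      exact hmem P
    have hval : ∀ p ∈ (Finset.univ : Finset (Nat.Partition n)).image φ,
        ∏ i : Fin n, x ^ (((i : ℕ) + 1) * p i) = x ^ n := by
      intro p hp
      obtain ⟨P, _, rfl⟩ := Finset.mem_image.1 hp
      rw [Finset.prod_pow_eq_pow_sum]
      rw [count_mul_sum n P]
    calc (Fintype.card (Nat.Partition n) : ℝ) * x ^ n
        = ∑ p ∈ (Finset.univ : Finset (Nat.Partition n)).image φ,
            ∏ i : Fin n, x ^ (((i : ℕ) + 1) * p i) := by
          rw [Finset.sum_congr rfl hval, Finset.sum_const,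
            Finset.card_image_of_injective _ (phi_inj n), Finset.card_univ, nsmul_eq_mul]
      _ ≤ _ := Finset.sum_le_sum_of_subset_of_nonneg himg
          (fun p _ _ => Finset.prod_nonneg fun i _ => pow_nonneg hx0.le _)
  -- step 2 : sum over piFinset = product of geometric partial sums
  have step2 : ∑ p ∈ Fintype.piFinset (fun _ : Fin n => Finset.range (n + 1)),
        ∏ i : Fin n, x ^ (((i : ℕ) + 1) * p i) =
      ∏ i : Fin n, ∑ j ∈ Finset.range (n + 1), x ^ (((i : ℕ) + 1) * j) :=
    (Finset.prod_univ_sum (fun _ : Fin n => Finset.range (n + 1)) (fun i j => x ^ (((i : ℕ) + 1) * j))).symm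
  -- step 3 : each geometric partial sum ≤ (1 - x^(k))⁻¹
  have step3 : ∏ i : Fin n, ∑ j ∈ Finset.range (n + 1), x ^ (((i : ℕ) + 1) * j) ≤
      ∏ i : Fin n, (1 - x ^ ((i : ℕ) + 1))⁻¹ := by
    apply Finset.prod_le_prod
    · intro i _
      exact Finset.sum_nonneg fun j _ => pow_nonneg hx0.le _
    · intro i _
      have hy1 : x ^ ((i : ℕ) + 1) ≠ 1 := by
        have := hxk (i : ℕ); intro h; rw [h] at this; simp at this
      calc ∑ j ∈ Finset.range (n + 1), x ^ (((i : ℕ) + 1) * j)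
          = ∑ j ∈ Finset.range (n + 1), (x ^ ((i : ℕ) + 1)) ^ j := by
            exact Finset.sum_congr rfl fun j _ => by rw [pow_mul]
        _ = ((x ^ ((i : ℕ) + 1)) ^ (n + 1) - 1) / (x ^ ((i : ℕ) + 1) - 1) := geom_sum_eq hy1 _
        _ = (1 - (x ^ ((i : ℕ) + 1)) ^ (n + 1)) / (1 - x ^ ((i : ℕ) + 1)) := by
            rw [← neg_div_neg_eq]; ring_nf
        _ ≤ 1 / (1 - x ^ ((i : ℕ) + 1)) := by
            have h2 := hxk (i : ℕ)
            have h3 : 0 ≤ (x ^ ((i : ℕ) + 1)) ^ (n + 1) := pow_nonneg (pow_nonneg hx0.le _) _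
            gcongr
            linarith
        _ = (1 - x ^ ((i : ℕ) + 1))⁻¹ := one_div _
  linarith [step1, step2 ▸ step1, step3]

lemma logsumB (n : ℕ) (t : ℝ) (ht : 0 < t) :
    ∑ i : Fin n, -Real.log (1 - Real.exp (-t) ^ ((i : ℕ) + 1)) ≤ π ^ 2 / 6 * (1 / t) := by
  set x := Real.exp (-t) with hxdef
  have hx0 : 0 < x := Real.exp_pos _
  have hx1 : x < 1 := by
    rw [hxdef, Real.exp_lt_one_iff]; linarith
  have hterm : ∀ i : Fin n,
      HasSum (fun m : ℕ => (x ^ ((i : ℕ) + 1)) ^ (m + 1) / (m + 1))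
        (-Real.log (1 - x ^ ((i : ℕ) + 1))) := by
    intro i
    apply hasSum_pow_div_log_of_abs_lt_one
    rw [abs_of_pos (pow_pos hx0 _)]
    exact pow_lt_one₀ hx0.le hx1 (Nat.succ_ne_zero _)
  have hG : HasSum (fun m : ℕ => ∑ i : Fin n, (x ^ ((i : ℕ) + 1)) ^ (m + 1) / (m + 1))
      (∑ i : Fin n, -Real.log (1 - x ^ ((i : ℕ) + 1))) :=
    hasSum_sum (fun i _ => hterm i)
  have hz0 : HasSum (fun m : ℕ => 1 / ((m : ℝ) + 1) ^ 2) (π ^ 2 / 6) := by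
    have h := (hasSum_nat_add_iff' (f := fun k : ℕ => (1 : ℝ) / (k : ℝ) ^ 2) 1).2 hasSum_zeta_two
    simpa using h
  have hz : HasSum (fun m : ℕ => 1 / ((m : ℝ) + 1) ^ 2 * (1 / t)) (π ^ 2 / 6 * (1 / t)) :=
    hz0.mul_right _
  refine hasSum_le ?_ hG hz
  intro m
  set s := t * ((m : ℝ) + 1) with hsdef
  have hm1 : (0 : ℝ) < (m : ℝ) + 1 := by positivity
  have hs : 0 < s := by positivity
  set y := x ^ (m + 1) with hydef
  have hy0 : 0 < y := pow_pos hx0 _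
  have hy1 : y < 1 := pow_lt_one₀ hx0.le hx1 (Nat.succ_ne_zero _)
  have hyexp : y = Real.exp (-s) := by
    rw [hydef, hxdef, ← Real.exp_nat_mul]
    congr 1
    push_cast
    ring
  have hys : y * s ≤ 1 - y := by
    have h1 : s + 1 ≤ Real.exp s := Real.add_one_le_exp s
    have h2 : y * (s + 1) ≤ y * Real.exp s := by nlinarith
    have h3 : y * Real.exp s = 1 := by
      rw [hyexp, ← Real.exp_add]; simp
    nlinarith
  have hgeom : ∑ i : Fin n, y ^ ((i : ℕ) + 1) ≤ 1 / s := by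
    have hy1' : y ≠ 1 := hy1.ne
    have hsum : ∑ i : Fin n, y ^ ((i : ℕ) + 1) = y * ∑ i ∈ Finset.range n, y ^ i := by
      rw [Finset.mul_sum, ← Fin.sum_univ_eq_sum_range (fun i => y * y ^ i) n]
      exact Finset.sum_congr rfl fun i _ => by rw [pow_succ']
    have hg : ∑ i ∈ Finset.range n, y ^ i ≤ 1 / (1 - y) := by
      rw [geom_sum_eq hy1', ← neg_div_neg_eq]
      have h3 : 0 ≤ y ^ n := pow_pos hy0 n |>.le
      have h4 : (0:ℝ) < 1 - y := by linarith
      rw [show -(y ^ n - 1) = 1 - y ^ n by ring, show -(y - 1) = 1 - y by ring]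
      gcongr
      linarith
    calc ∑ i : Fin n, y ^ ((i : ℕ) + 1) = y * ∑ i ∈ Finset.range n, y ^ i := hsum
      _ ≤ y * (1 / (1 - y)) := by
          apply mul_le_mul_of_nonneg_left hg hy0.le
      _ = y / (1 - y) := by ring
      _ ≤ 1 / s := by
          rw [div_le_div_iff₀ (by linarith) hs]
          linarith [hys]
  calc ∑ i : Fin n, (x ^ ((i : ℕ) + 1)) ^ (m + 1) / ((m : ℝ) + 1)
      = (∑ i : Fin n, y ^ ((i : ℕ) + 1)) / ((m : ℝ) + 1) := by
        rw [Finset.sum_div]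
        refine Finset.sum_congr rfl fun i _ => ?_
        rw [hydef, ← pow_mul, ← pow_mul, Nat.mul_comm]
    _ ≤ (1 / s) / ((m : ℝ) + 1) := by gcongr
    _ = 1 / ((m : ℝ) + 1) ^ 2 * (1 / t) := by
        rw [hsdef]; field_simp

theorem stmt_1 (n : ℕ) (hn : 0 < n) :
    Real.log (Fintype.card (Nat.Partition n)) ≤ Real.pi * Real.sqrt (2 * n / 3) := by
  have hn' : (0 : ℝ) < n := by exact_mod_cast hn
  set s := Real.sqrt (6 * n) with hsdef
  have hs : 0 < s := Real.sqrt_pos.2 (by positivity)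
  have hs2 : s ^ 2 = 6 * n := Real.sq_sqrt (by positivity)
  set t := π / s with htdef
  have ht : 0 < t := div_pos Real.pi_pos hs
  set x := Real.exp (-t) with hxdef
  have hx0 : 0 < x := Real.exp_pos _
  have hx1 : x < 1 := by rw [hxdef, Real.exp_lt_one_iff]; linarith
  have hxk : ∀ k : ℕ, 0 < 1 - x ^ (k + 1) := fun k =>
    sub_pos.2 (pow_lt_one₀ hx0.le hx1 (Nat.succ_ne_zero k))
  have hA := cardA n x hx0 hx1
  have hcard : (1 : ℝ) ≤ (Fintype.card (Nat.Partition n) : ℝ) :=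
    Nat.one_le_cast.2 Fintype.card_pos
  have hcp : (0 : ℝ) < (Fintype.card (Nat.Partition n) : ℝ) := by linarith
  have hlog1 : Real.log ((Fintype.card (Nat.Partition n) : ℝ) * x ^ n) ≤
      Real.log (∏ i : Fin n, (1 - x ^ ((i : ℕ) + 1))⁻¹) :=
    Real.log_le_log (by positivity) hA
  have hlogprod : Real.log (∏ i : Fin n, (1 - x ^ ((i : ℕ) + 1))⁻¹) =
      ∑ i : Fin n, -Real.log (1 - x ^ ((i : ℕ) + 1)) := by
    rw [Real.log_prod (s := Finset.univ) (f := fun i : Fin n => (1 - x ^ ((i : ℕ) + 1))⁻¹) (fun i _ => inv_ne_zero (hxk (i : ℕ)).ne')]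
    exact Finset.sum_congr rfl fun i _ => Real.log_inv _
  have hlogmul : Real.log ((Fintype.card (Nat.Partition n) : ℝ) * x ^ n) =
      Real.log (Fintype.card (Nat.Partition n)) + n * Real.log x := by
    rw [Real.log_mul hcp.ne' (by positivity), Real.log_pow]
  have hlx : Real.log x = -t := Real.log_exp _
  have hmain : Real.log (Fintype.card (Nat.Partition n)) ≤ n * t + π ^ 2 / 6 * (1 / t) := by
    have hB := logsumB n t ht
    rw [hlogmul, hlx] at hlog1
    rw [hlogprod] at hlog1
    linarith
  have heq : (n : ℝ) * t + π ^ 2 / 6 * (1 / t) = π * (s / 3) := by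
    have hn6 : (n : ℝ) = s ^ 2 / 6 := by linarith
    rw [htdef, hn6]
    field_simp
    ring
  have hsq : Real.sqrt (2 * n / 3) = s / 3 := by
    rw [show (2 * (n : ℝ) / 3) = (s / 3) ^ 2 by rw [div_pow, hs2]; ring,
      Real.sqrt_sq (by positivity)]
  rw [hsq]
  linarith [hmain, heq]
end

section
/- Let m be a positive integer and let r be an integer with 0 ≤ r ≤ m−1. Then for every real number x > 0, one has ((r+m)·e^{−(r+m)·x} − r·e^{−(2m+r)·x}) / (1 − e^{−m·x})² ≤ 1 / (m·x²). -/
/-! With `u = m x`, the numerator equals `e^{-(r+m)x} (m + r (1 - e^{-u}))`, and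
`1 - e^{-u} ≤ u` together with `1 + r x ≤ e^{r x}` bounds it by `m e^{-u}`.
For the denominator, `1 - e^{-u} = 2 e^{-u/2} sinh (u/2) ≥ u e^{-u/2}`, so
`(1 - e^{-u})² ≥ u² e^{-u}`, and the quotient is at most `m / u² = 1 / (m x²)`. -/

open Real

theorem mul_exp_neg_half_le_one_sub_exp_neg {u : ℝ} (hu : 0 ≤ u) :
    u * exp (-(u / 2)) ≤ 1 - exp (-u) := by
  have hsinh : u / 2 ≤ sinh (u / 2) := self_le_sinh_iff.mpr (by linarith)
  have hfactor : 1 - exp (-u) = 2 * sinh (u / 2) * exp (-(u / 2)) := by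
    have hinv : exp (u / 2) * exp (-(u / 2)) = 1 := by rw [← exp_add]; simp
    have hsq : exp (-(u / 2)) * exp (-(u / 2)) = exp (-u) := by rw [← exp_add]; ring_nf
    rw [sinh_eq]
    linear_combination hsq - hinv
  rw [hfactor]
  gcongr
  linarith

theorem sq_mul_exp_neg_le_one_sub_exp_neg_sq {u : ℝ} (hu : 0 ≤ u) :
    u ^ 2 * exp (-u) ≤ (1 - exp (-u)) ^ 2 := by
  have hhalf : exp (-u) = exp (-(u / 2)) ^ 2 := by
    rw [← exp_nat_mul]; ring_nf
  calc u ^ 2 * exp (-u) = (u * exp (-(u / 2))) ^ 2 := by rw [hhalf]; ring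
    _ ≤ (1 - exp (-u)) ^ 2 := by
      gcongr
      exact mul_exp_neg_half_le_one_sub_exp_neg hu

theorem exp_neg_div_one_sub_exp_neg_sq_le {u : ℝ} (hu : 0 < u) :
    exp (-u) / (1 - exp (-u)) ^ 2 ≤ 1 / u ^ 2 := by
  have hden : 0 < 1 - exp (-u) := by
    rw [sub_pos, exp_lt_one_iff]; linarith
  rw [div_le_div_iff₀ (by positivity) (by positivity)]
  linarith [sq_mul_exp_neg_le_one_sub_exp_neg_sq hu.le]

theorem add_mul_exp_neg_sub_mul_exp_neg_le {a b : ℝ} (ha : 0 ≤ a) (hb : 0 ≤ b) (x : ℝ) :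
    (a + b) * exp (-(a + b) * x) - a * exp (-(2 * b + a) * x) ≤ b * exp (-b * x) := by
  have hfactor : (a + b) * exp (-(a + b) * x) - a * exp (-(2 * b + a) * x)
      = exp (-a * x) * exp (-b * x) * (b + a * (1 - exp (-(b * x)))) := by
    have h1 : exp (-(a + b) * x) = exp (-a * x) * exp (-b * x) := by
      rw [← exp_add]; ring_nf
    have h2 : exp (-(2 * b + a) * x) = exp (-a * x) * exp (-b * x) * exp (-(b * x)) := by
      rw [← exp_add, ← exp_add]; ring_nf
    rw [h1, h2]
    ring
  have hbracket : b + a * (1 - exp (-(b * x))) ≤ b * exp (a * x) :=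
    calc b + a * (1 - exp (-(b * x))) ≤ b + a * (b * x) := by
          gcongr
          linarith [add_one_le_exp (-(b * x))]
      _ = b * (a * x + 1) := by ring
      _ ≤ b * exp (a * x) := by gcongr; exact add_one_le_exp _
  calc (a + b) * exp (-(a + b) * x) - a * exp (-(2 * b + a) * x)
      ≤ exp (-a * x) * exp (-b * x) * (b * exp (a * x)) := by
        rw [hfactor]; exact mul_le_mul_of_nonneg_left hbracket (by positivity)
    _ = b * exp (-b * x) := by
        rw [show exp (-a * x) * exp (-b * x) * (b * exp (a * x))
            = b * exp (-b * x) * (exp (-a * x) * exp (a * x)) by ring,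
          ← exp_add]
        simp

theorem stmt_11_general (m : ℕ) (hm : 0 < m) (r : ℕ) (x : ℝ) (hx : 0 < x) :
    (((r : ℝ) + m) * Real.exp (-((r : ℝ) + m) * x) - r * Real.exp (-(2 * (m : ℝ) + r) * x)) /
        (1 - Real.exp (-(m : ℝ) * x)) ^ 2 ≤ 1 / (m * x ^ 2) := by
  have hm' : (0 : ℝ) < m := Nat.cast_pos.mpr hm
  calc _ ≤ m * exp (-(m : ℝ) * x) / (1 - exp (-(m : ℝ) * x)) ^ 2 := by
        gcongr
        exact add_mul_exp_neg_sub_mul_exp_neg_le r.cast_nonneg m.cast_nonneg x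
    _ = m * (exp (-(m * x)) / (1 - exp (-(m * x))) ^ 2) := by rw [neg_mul, mul_div_assoc]
    _ ≤ m * (1 / (m * x) ^ 2) :=
        mul_le_mul_of_nonneg_left (exp_neg_div_one_sub_exp_neg_sq_le (mul_pos hm' hx)) hm'.le
    _ = 1 / (m * x ^ 2) := by field_simp

theorem stmt_11 (m : ℕ) (hm : 0 < m) (r : ℕ) (hr : r ≤ m - 1) (x : ℝ) (hx : 0 < x) :
    (((r : ℝ) + m) * Real.exp (-((r : ℝ) + m) * x) - r * Real.exp (-(2 * (m : ℝ) + r) * x)) /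
        (1 - Real.exp (-(m : ℝ) * x)) ^ 2 ≤ 1 / (m * x ^ 2) :=
  stmt_11_general m hm r x hx
end

section
/- Let m be a positive integer, R ⊆ {0,1,…,m−1}, and let A⁺ be the set of integers a ≥ m with (a mod m) ∈ R. Then for every real number x > 0, the family (a·e^{−a·x})_{a ∈ A⁺} is summable and Σ_{a ∈ A⁺} a·e^{−a·x} ≤ |R| / (m·x²). -/
lemma auxKey1 (y c : ℝ) (hy : 0 < y) (hyc : y ≤ c) :
    c * (1 - Real.exp (-y)) * Real.exp (-c) ≤ y * Real.exp (-y) * (1 - Real.exp (-c)) := by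
  have h1 : (c - y) + 1 ≤ Real.exp (c - y) := Real.add_one_le_exp _
  have h2 : (-y) + 1 ≤ Real.exp (-y) := Real.add_one_le_exp _
  have h3 : Real.exp (c - y) * Real.exp (-c) = Real.exp (-y) := by
    rw [← Real.exp_add]; ring_nf
  have hv : 0 < Real.exp (-c) := Real.exp_pos _
  have hu : 0 < Real.exp (-y) := Real.exp_pos _
  set u := Real.exp (-y)
  set v := Real.exp (-c)
  have h4 : v * (1 + (c - y)) ≤ u := by nlinarith
  have h5 : 1 - y ≤ u := by linarith
  nlinarith [mul_nonneg (mul_nonneg hv.le (sub_nonneg.2 hyc)) (by linarith : (0:ℝ) ≤ y + u - 1)]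

lemma auxKey2 (y : ℝ) (hy : 0 < y) : y ^ 2 * Real.exp (-y) ≤ (1 - Real.exp (-y)) ^ 2 := by
  have hs : y / 2 < Real.sinh (y / 2) := Real.self_lt_sinh_iff.2 (by linarith)
  rw [Real.sinh_eq] at hs
  have ha : 0 < Real.exp (-(y / 2)) := Real.exp_pos _
  have h2 : Real.exp (-(y / 2)) * Real.exp (-(y / 2)) = Real.exp (-y) := by
    rw [← Real.exp_add]; ring_nf
  have h3 : Real.exp (y / 2) * Real.exp (-(y / 2)) = 1 := by
    rw [← Real.exp_add]; simp
  have key : y * Real.exp (-(y / 2)) ≤ 1 - Real.exp (-y) := by nlinarith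
  have h0 : 0 ≤ y * Real.exp (-(y / 2)) := by positivity
  nlinarith [sq_nonneg (y * Real.exp (-(y/2)))]

lemma auxSumR (m : ℕ) (hm : 0 < m) (x : ℝ) (hx : 0 < x) (r : ℕ) (hr : r < m) :
    ∑' k : ℕ, ((r + (k + 1) * m : ℕ) : ℝ) * Real.exp (-x) ^ (r + (k + 1) * m) ≤
      1 / (m * x ^ 2) := by
  set q : ℝ := Real.exp (-x) with hq
  have hq0 : 0 < q := Real.exp_pos _
  have hq1 : q < 1 := Real.exp_lt_one_iff.2 (by linarith)
  set t : ℝ := q ^ m with ht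
  have ht0 : 0 < t := pow_pos hq0 m
  have ht1 : t < 1 := pow_lt_one₀ hq0.le hq1 hm.ne'
  have htn : ‖t‖ < 1 := by rw [Real.norm_eq_abs, abs_of_pos ht0]; exact ht1
  set b : ℝ := ((r + m : ℕ) : ℝ) with hb
  set M : ℝ := (m : ℝ) with hM
  have hM0 : 0 < M := by rw [hM]; exact_mod_cast hm
  have hterm : ∀ k : ℕ, ((r + (k + 1) * m : ℕ) : ℝ) * q ^ (r + (k + 1) * m)
      = q ^ (r + m) * b * t ^ k + q ^ (r + m) * M * ((k : ℝ) * t ^ k) := by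
    intro k
    have he : r + (k + 1) * m = (r + m) + m * k := by ring
    rw [he, pow_add, pow_mul, hb, hM, ← ht]
    push_cast
    ring
  have hs1 : Summable (fun k : ℕ => q ^ (r + m) * b * t ^ k) :=
    (summable_geometric_of_lt_one ht0.le ht1).mul_left _
  have hs2 : Summable (fun k : ℕ => q ^ (r + m) * M * ((k : ℝ) * t ^ k)) := by
    have := summable_pow_mul_geometric_of_norm_lt_one 1 htn
    simp only [pow_one] at this
    exact this.mul_left _
  have hsum : ∑' k : ℕ, ((r + (k + 1) * m : ℕ) : ℝ) * q ^ (r + (k + 1) * m)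
      = q ^ (r + m) * b * (1 - t)⁻¹ + q ^ (r + m) * M * (t / (1 - t) ^ 2) := by
    rw [tsum_congr hterm, Summable.tsum_add hs1 hs2, tsum_mul_left, tsum_mul_left,
      tsum_geometric_of_lt_one ht0.le ht1, tsum_coe_mul_geometric_of_norm_lt_one htn]
  rw [hsum]
  -- now the analytic estimate
  set y : ℝ := M * x with hy
  set c : ℝ := b * x with hc
  have hy0 : 0 < y := mul_pos hM0 hx
  have hyc : y ≤ c := by
    have : M ≤ b := by rw [hb, hM]; push_cast; linarith
    exact mul_le_mul_of_nonneg_right this hx.le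
  have hqt : t = Real.exp (-y) := by
    rw [ht, hq, ← Real.exp_nat_mul, hy, hM]; ring_nf
  have hqc : q ^ (r + m) = Real.exp (-c) := by
    rw [hq, ← Real.exp_nat_mul, hc, hb]; ring_nf
  have hC0 : 0 < Real.exp (-c) := Real.exp_pos _
  have h1 := auxKey1 y c hy0 hyc
  rw [← hqt] at h1
  have h2 := auxKey2 y hy0
  rw [← hqt] at h2
  have hs0 : 0 < 1 - t := by linarith
  -- step A : exp(-c) * (b*(1-t) + M*t) ≤ M*t
  have hA : Real.exp (-c) * (b * (1 - t) + M * t) ≤ M * t := by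
    have hx' : c * (1 - t) * Real.exp (-c) ≤ y * t * (1 - Real.exp (-c)) := h1
    rw [hc, hy] at hx'
    nlinarith
  rw [hqc]
  have hL : Real.exp (-c) * b * (1 - t)⁻¹ + Real.exp (-c) * M * (t / (1 - t) ^ 2)
      = Real.exp (-c) * (b * (1 - t) + M * t) / (1 - t) ^ 2 := by
    field_simp
  rw [hL]
  have step1 : Real.exp (-c) * (b * (1 - t) + M * t) / (1 - t) ^ 2 ≤ M * t / (1 - t) ^ 2 := by
    gcongr
  have step2 : M * t / (1 - t) ^ 2 ≤ 1 / (M * x ^ 2) := by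
    rw [div_le_div_iff₀ (by positivity) (by positivity)]
    rw [hy] at h2
    nlinarith
  linarith

theorem stmt_12 (m : ℕ) (hm : 0 < m) (R : Finset ℕ) (hR : R ⊆ Finset.range m)
    (Aplus : Set ℕ) (hA : Aplus = {a : ℕ | m ≤ a ∧ a % m ∈ R}) (x : ℝ) (hx : 0 < x) :
    Summable (fun a : Aplus => ((a : ℕ) : ℝ) * Real.exp (-((a : ℕ) : ℝ) * x)) ∧
      ∑' a : Aplus, ((a : ℕ) : ℝ) * Real.exp (-((a : ℕ) : ℝ) * x) ≤
        (R.card : ℝ) / (m * x ^ 2) := by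
  set q : ℝ := Real.exp (-x) with hq
  have hq0 : 0 < q := Real.exp_pos _
  have hq1 : q < 1 := Real.exp_lt_one_iff.2 (by linarith)
  have hqn : ‖q‖ < 1 := by rw [Real.norm_eq_abs, abs_of_pos hq0]; exact hq1
  have hfun : ∀ a : ℕ, (a : ℝ) * Real.exp (-(a : ℝ) * x) = (a : ℝ) * q ^ a := by
    intro a
    rw [hq, ← Real.exp_nat_mul]
    ring_nf
  set f : ℕ → ℝ := fun a => (a : ℝ) * q ^ a with hf
  have hF : Summable f := by
    have := summable_pow_mul_geometric_of_norm_lt_one 1 hqn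
    simpa using this
  have hfnn : ∀ a, 0 ≤ f a := fun a => by
    simp only [hf]; positivity
  have hsub : Summable (fun a : Aplus => ((a : ℕ) : ℝ) * Real.exp (-((a : ℕ) : ℝ) * x)) := by
    have : Summable (f ∘ (Subtype.val : Aplus → ℕ)) := hF.subtype Aplus
    refine this.congr fun a => ?_
    simp only [Function.comp_apply, hf, hfun]
  refine ⟨hsub, ?_⟩
  have e1 : ∑' a : Aplus, ((a : ℕ) : ℝ) * Real.exp (-((a : ℕ) : ℝ) * x)
      = ∑' a : ℕ, Aplus.indicator f a := by
    rw [← tsum_subtype]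
    exact tsum_congr fun a => by simp only [hf, hfun]
  set g : ℕ → ℕ → ℝ := fun r a => if m ≤ a ∧ a % m = r then f a else 0 with hg
  have hgle : ∀ r a, g r a ≤ f a := by
    intro r a; simp only [hg]; split
    · exact le_rfl
    · exact hfnn a
  have hgnn : ∀ r a, 0 ≤ g r a := by
    intro r a; simp only [hg]; split
    · exact hfnn a
    · exact le_rfl
  have hgsum : ∀ r, Summable (g r) := fun r =>
    Summable.of_nonneg_of_le (hgnn r) (hgle r) hF
  have hind : ∀ a : ℕ, Aplus.indicator f a = ∑ r ∈ R, g r a := by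
    intro a
    by_cases ha : a ∈ Aplus
    · rw [Set.indicator_of_mem ha]
      rw [hA] at ha
      obtain ⟨h1, h2⟩ := ha
      rw [Finset.sum_eq_single (a % m)]
      · simp [hg, h1]
      · intro r hrR hne
        simp only [hg]
        rw [if_neg]
        rintro ⟨-, h⟩
        exact hne h.symm
      · intro h; exact absurd h2 h
    · rw [Set.indicator_of_notMem ha]
      rw [hA] at ha
      refine (Finset.sum_eq_zero fun r hrR => ?_).symm
      simp only [hg]
      rw [if_neg]
      rintro ⟨h1, h2⟩
      exact ha ⟨h1, h2 ▸ hrR⟩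
  have e2 : ∑' a : ℕ, Aplus.indicator f a = ∑ r ∈ R, ∑' a : ℕ, g r a := by
    rw [tsum_congr hind, Summable.tsum_finsetSum fun r _ => hgsum r]
  have key : ∀ r ∈ R, ∑' a : ℕ, g r a ≤ 1 / (m * x ^ 2) := by
    intro r hrR
    have hrm : r < m := Finset.mem_range.1 (hR hrR)
    have inj : Function.Injective (fun k : ℕ => r + (k + 1) * m) := by
      intro k1 k2 h
      simp only at h
      have : (k1 + 1) * m = (k2 + 1) * m := by omega
      have := Nat.eq_of_mul_eq_mul_right hm this
      omega
    have supp : Function.support (g r) ⊆ Set.range (fun k : ℕ => r + (k + 1) * m) := by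
      intro a ha
      simp only [Function.mem_support, hg] at ha
      by_cases hc : m ≤ a ∧ a % m = r
      · obtain ⟨h1, h2⟩ := hc
        have hd : 1 ≤ a / m := (Nat.one_le_div_iff hm).2 h1
        refine ⟨a / m - 1, ?_⟩
        simp only
        have := Nat.mod_add_div' a m
        have h3 : a / m - 1 + 1 = a / m := by omega
        rw [h3]
        omega
      · exact absurd (if_neg hc) ha
    have e3 : ∑' a : ℕ, g r a = ∑' k : ℕ, ((r + (k + 1) * m : ℕ) : ℝ) * q ^ (r + (k + 1) * m) := by
      rw [← Function.Injective.tsum_eq inj supp]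
      refine tsum_congr fun k => ?_
      simp only [hg, hf]
      rw [if_pos]
      refine ⟨?_, ?_⟩
      · calc m ≤ (k + 1) * m := Nat.le_mul_of_pos_left m (Nat.succ_pos k)
          _ ≤ r + (k + 1) * m := Nat.le_add_left _ _
      · rw [Nat.add_mul_mod_self_right, Nat.mod_eq_of_lt hrm]
    rw [e3]
    exact auxSumR m hm x hx r hrm
  calc ∑' a : Aplus, ((a : ℕ) : ℝ) * Real.exp (-((a : ℕ) : ℝ) * x)
      = ∑ r ∈ R, ∑' a : ℕ, g r a := by rw [e1, e2]
    _ ≤ ∑ r ∈ R, 1 / ((m : ℝ) * x ^ 2) := Finset.sum_le_sum key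
    _ = (R.card : ℝ) / (m * x ^ 2) := by
        rw [Finset.sum_const, nsmul_eq_mul]
        ring
end

section
/- Let S be a set of positive integers and let n be a natural number. Then n · p_S(n) = Σ_{s ∈ S, s ≤ n} s · Σ_{k=1}^{⌊n/s⌋} p_S(n − s·k), where p_S denotes the number of partitions with all parts in S. -/
open scoped Classical

/-!
Weigh each partition `p` of `n` by its size `n = ∑ s, s * m_s(p)`, where `m_s(p)` is the
multiplicity of the part `s`. Summing over `p` and exchanging sums, it remains to count
`∑_p m_s(p) = ∑_{k ≥ 1} #{p | k ≤ m_s(p)}`, and removing `k` copies of `s` is a bijection from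
the partitions of `n` with `k ≤ m_s` onto the partitions of `n - s * k`.
-/

open Finset

theorem partitionsIn_eq_card_restricted (S : Set ℕ) (n : ℕ) :
    partitionsIn S n = #(Nat.Partition.restricted n (· ∈ S)) := by
  rw [partitionsIn, Nat.card_eq_fintype_card, Fintype.card_subtype, Nat.Partition.restricted]

theorem Finset.sum_eq_sum_Icc_card_filter_le {ι : Type*} (T : Finset ι) (f : ι → ℕ) {N : ℕ}
    (hf : ∀ i ∈ T, f i ≤ N) : ∑ i ∈ T, f i = ∑ k ∈ Icc 1 N, #{i ∈ T | k ≤ f i} := by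
  simp only [card_filter]
  rw [sum_comm]
  refine sum_congr rfl fun i hi => ?_
  have hIcc : {k ∈ Icc 1 N | k ≤ f i} = Icc 1 (f i) := by
    ext k
    simp only [mem_filter, mem_Icc]
    have := hf i hi
    omega
  rw [← card_filter, hIcc, Nat.card_Icc, Nat.add_sub_cancel]

namespace Nat.Partition

@[simp]
theorem mem_restricted {n : ℕ} {P : ℕ → Prop} [DecidablePred P] {p : n.Partition} :
    p ∈ restricted n P ↔ ∀ a ∈ p.parts, P a := by
  simp [restricted]

theorem sum_mul_count {n : ℕ} (p : n.Partition) {F : Finset ℕ} (hF : ∀ a ∈ p.parts, a ∈ F) :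
    ∑ s ∈ F, s * p.parts.count s = n := by
  have h := p.parts_sum
  rw [sum_multiset_count_of_subset p.parts F fun a ha => hF a (Multiset.mem_toFinset.1 ha)] at h
  simpa only [smul_eq_mul, mul_comm] using h

theorem mul_count_le {n : ℕ} (p : n.Partition) (s : ℕ) : s * p.parts.count s ≤ n :=
  calc s * p.parts.count s ≤ ∑ a ∈ insert s p.parts.toFinset, a * p.parts.count a :=
        single_le_sum (f := fun a => a * p.parts.count a) (fun _ _ => Nat.zero_le _)
          (mem_insert_self _ _)
    _ = n := p.sum_mul_count fun _ ha => mem_insert_of_mem (Multiset.mem_toFinset.2 ha)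

theorem count_le_div {n : ℕ} (p : n.Partition) (s : ℕ) : p.parts.count s ≤ n / s := by
  rcases Nat.eq_zero_or_pos s with rfl | hs
  · simpa [Multiset.count_eq_zero] using fun h => (p.parts_pos h).false
  · exact (Nat.le_div_iff_mul_le hs).2 (by rw [mul_comm]; exact p.mul_count_le s)

def addReplicate {m : ℕ} (q : m.Partition) {s : ℕ} (hs : 0 < s) (k : ℕ) {n : ℕ}
    (h : m + s * k = n) : n.Partition where
  parts := q.parts + Multiset.replicate k s
  parts_pos {a} ha := by
    rcases Multiset.mem_add.1 ha with ha | ha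
    · exact q.parts_pos ha
    · exact (Multiset.eq_of_mem_replicate ha) ▸ hs
  parts_sum := by simp [q.parts_sum, mul_comm, h]

def subReplicate {n : ℕ} (p : n.Partition) {s k : ℕ} (hp : Multiset.replicate k s ≤ p.parts)
    {m : ℕ} (h : m + s * k = n) : m.Partition where
  parts := p.parts - Multiset.replicate k s
  parts_pos ha := p.parts_pos (Multiset.mem_of_le (Multiset.sub_le_self _ _) ha)
  parts_sum := by
    have hsum := congrArg Multiset.sum (tsub_add_cancel_of_le hp)
    rw [Multiset.sum_add, Multiset.sum_replicate, p.parts_sum, smul_eq_mul, mul_comm k s] at hsum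
    omega

theorem card_restricted_filter_le_count {P : ℕ → Prop} [DecidablePred P] {n s k : ℕ}
    (hs : 0 < s) (hPs : P s) (hk : s * k ≤ n) :
    #{p ∈ restricted n P | k ≤ p.parts.count s} = #(restricted (n - s * k) P) := by
  have hn : n - s * k + s * k = n := Nat.sub_add_cancel hk
  refine card_bij'
    (fun p hp => p.subReplicate (Multiset.le_count_iff_replicate_le.1 (mem_filter.1 hp).2) hn)
    (fun q _ => q.addReplicate hs k hn) ?_ ?_ ?_ ?_
  · intro p hp
    rw [mem_filter, mem_restricted] at hp
    exact mem_restricted.2 fun a ha => hp.1 a (Multiset.mem_of_le (Multiset.sub_le_self _ _) ha)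
  · intro q hq
    rw [mem_restricted] at hq
    refine mem_filter.2 ⟨mem_restricted.2 fun a ha => ?_, by simp [addReplicate]⟩
    rcases Multiset.mem_add.1 ha with ha | ha
    · exact hq a ha
    · exact (Multiset.eq_of_mem_replicate ha) ▸ hPs
  · intro p hp
    ext1
    exact tsub_add_cancel_of_le (Multiset.le_count_iff_replicate_le.1 (mem_filter.1 hp).2)
  · intro q _
    ext1
    exact add_tsub_cancel_right _ _

end Nat.Partition

theorem stmt_13_general (S : Set ℕ) (n : ℕ) :
    n * partitionsIn S n =
      ∑ s ∈ (Finset.Icc 1 n).filter (· ∈ S),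
        s * ∑ k ∈ Finset.Icc 1 (n / s), partitionsIn S (n - s * k) := by
  set F := (Finset.Icc 1 n).filter (· ∈ S)
  simp only [partitionsIn_eq_card_restricted]
  calc n * #(Nat.Partition.restricted n (· ∈ S))
      = ∑ p ∈ Nat.Partition.restricted n (· ∈ S), ∑ s ∈ F, s * p.parts.count s := by
        rw [mul_comm, ← smul_eq_mul, ← sum_const]
        refine sum_congr rfl fun p hp => (p.sum_mul_count fun a ha => ?_).symm
        rw [Nat.Partition.mem_restricted] at hp
        exact mem_filter.2 ⟨mem_Icc.2 ⟨p.parts_pos ha, p.le_of_mem_parts ha⟩, hp a ha⟩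
    _ = ∑ s ∈ F, s * ∑ p ∈ Nat.Partition.restricted n (· ∈ S), p.parts.count s := by
        rw [sum_comm]; simp only [mul_sum]
    _ = _ := by
        refine sum_congr rfl fun s hsF => ?_
        obtain ⟨hsn, hsS⟩ := mem_filter.1 hsF
        have hs : 0 < s := (mem_Icc.1 hsn).1
        rw [sum_eq_sum_Icc_card_filter_le _ _ fun p _ => p.count_le_div s]
        refine congrArg (s * ·) (sum_congr rfl fun k hk => ?_)
        have hsk : s * k ≤ n := by
          rw [mul_comm]; exact (Nat.le_div_iff_mul_le hs).1 (mem_Icc.1 hk).2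
        exact Nat.Partition.card_restricted_filter_le_count hs hsS hsk

theorem stmt_13 (S : Set ℕ) (hS : ∀ s ∈ S, 0 < s) (n : ℕ) :
    n * partitionsIn S n =
      ∑ s ∈ (Finset.Icc 1 n).filter (· ∈ S),
        s * ∑ k ∈ Finset.Icc 1 (n / s), partitionsIn S (n - s * k) :=
  stmt_13_general S n
end

section
/- Let m be a positive integer, R ⊆ {0,1,…,m−1} be nonempty, let A⁺ be the set of integers a ≥ m with (a mod m) ∈ R, and set c = π · √(2·|R| / (3·m)). Then for every positive integer n, Σ_{k=1}^{∞} Σ_{a ∈ A⁺} a · e^{−a·c·k / (2·√n)} ≤ n. -/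
open Real

lemma st17_key {t a b : ℝ} (ht : 0 < t) (hb : 0 < b) (hab : b ≤ a) :
    a * (Real.exp (b * t) - 1) ≤ b * (Real.exp (a * t) - 1) := by
  have hbne : b ≠ 0 := ne_of_gt hb
  have h1 : (1 : ℝ) ≤ a / b := (one_le_div hb).mpr hab
  have hs : (-1 : ℝ) ≤ Real.exp (b * t) - 1 := by nlinarith [Real.exp_pos (b * t)]
  have hB := one_add_mul_self_le_rpow_one_add hs h1
  rw [show (1 : ℝ) + (Real.exp (b * t) - 1) = Real.exp (b * t) by ring] at hB
  rw [← Real.exp_mul, show b * t * (a / b) = a * t by field_simp] at hB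
  have h3 : b * (1 + a / b * (Real.exp (b * t) - 1)) = b + a * (Real.exp (b * t) - 1) := by
    field_simp
  have h4 := mul_le_mul_of_nonneg_left hB hb.le
  linarith

lemma st17_mono {t a b : ℝ} (ht : 0 < t) (hb : 0 < b) (hab : b ≤ a) :
    a * Real.exp (-(a * t)) / (1 - Real.exp (-(a * t))) ≤
      b * Real.exp (-(b * t)) / (1 - Real.exp (-(b * t))) := by
  have ha : 0 < a := lt_of_lt_of_le hb hab
  have hpa : Real.exp (-(a * t)) < 1 := by rw [Real.exp_lt_one_iff]; nlinarith
  have hpb : Real.exp (-(b * t)) < 1 := by rw [Real.exp_lt_one_iff]; nlinarith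
  have hea : Real.exp (a * t) * Real.exp (-(a * t)) = 1 := by rw [← Real.exp_add]; simp
  have heb : Real.exp (b * t) * Real.exp (-(b * t)) = 1 := by rw [← Real.exp_add]; simp
  have key := st17_key ht hb hab
  have hpa0 := Real.exp_pos (-(a * t))
  have hpb0 := Real.exp_pos (-(b * t))
  rw [div_le_div_iff₀ (by linarith) (by linarith)]
  have hmul := mul_le_mul_of_nonneg_right key (mul_pos hpa0 hpb0).le
  have e1 : a * (Real.exp (b * t) - 1) * (Real.exp (-(a * t)) * Real.exp (-(b * t)))
      = a * Real.exp (-(a * t)) * (1 - Real.exp (-(b * t))) := by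
    linear_combination a * Real.exp (-(a * t)) * heb
  have e2 : b * (Real.exp (a * t) - 1) * (Real.exp (-(a * t)) * Real.exp (-(b * t)))
      = b * Real.exp (-(b * t)) * (1 - Real.exp (-(a * t))) := by
    linear_combination b * Real.exp (-(b * t)) * hea
  linarith

lemma st17_sinh {u : ℝ} (hu : 0 < u) :
    u ^ 2 * Real.exp (-u) ≤ (1 - Real.exp (-u)) ^ 2 := by
  have h2 : 0 < u / 2 := by linarith
  have hs : u / 2 < Real.sinh (u / 2) := Real.self_lt_sinh_iff.mpr h2
  rw [Real.sinh_eq] at hs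
  have hvw : Real.exp (u / 2) * Real.exp (-(u / 2)) = 1 := by rw [← Real.exp_add]; simp
  have hv2 : Real.exp (-(u / 2)) * Real.exp (-(u / 2)) = Real.exp (-u) := by
    rw [← Real.exp_add]; ring_nf
  have hv0 := Real.exp_pos (-(u / 2))
  have hprod := mul_lt_mul_of_pos_right
    (show u < Real.exp (u / 2) - Real.exp (-(u / 2)) by linarith) hv0
  have h1 : u * Real.exp (-(u / 2)) < 1 - Real.exp (-(u / 2)) * Real.exp (-(u / 2)) := by
    nlinarith [hprod, hvw]
  have h2' : 0 < u * Real.exp (-(u / 2)) := mul_pos hu hv0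
  rw [← hv2]
  nlinarith [h1, h2']

open ENNReal in
lemma st17_geom {x s : ℝ} (hx : 0 < x) (hs : 0 < s) :
    ∑' k : ℕ, ENNReal.ofReal (x * Real.exp (-(x * (s * (k + 1))))) =
      ENNReal.ofReal (x * Real.exp (-(x * s)) / (1 - Real.exp (-(x * s)))) := by
  set q : ℝ := Real.exp (-(x * s)) with hq
  have hq0 : 0 < q := Real.exp_pos _
  have hq1 : q < 1 := by rw [hq, Real.exp_lt_one_iff]; nlinarith
  have hterm : ∀ k : ℕ, x * Real.exp (-(x * (s * (k + 1)))) = x * q ^ (k + 1) := by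
    intro k
    rw [hq, ← Real.exp_nat_mul]
    congr 1
    push_cast
    ring
  have hsummable : Summable fun k : ℕ => x * q ^ (k + 1) := by
    apply Summable.mul_left
    exact ((summable_geometric_of_lt_one hq0.le hq1).comp_injective (add_left_injective 1))
  have htsum : ∑' k : ℕ, x * q ^ (k + 1) = x * q / (1 - q) := by
    rw [tsum_mul_left]
    have : ∑' k : ℕ, q ^ (k + 1) = q / (1 - q) := by
      have h0 := tsum_geometric_of_lt_one hq0.le hq1
      have h1 := Summable.tsum_eq_zero_add (summable_geometric_of_lt_one hq0.le hq1)
      rw [h0] at h1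
      have : ∑' k : ℕ, q ^ (k + 1) = (1 - q)⁻¹ - 1 := by
        rw [pow_zero] at h1; linarith
      have h1q : (1:ℝ) - q ≠ 0 := by linarith
      rw [this, inv_eq_one_div, div_sub_one h1q]
      congr 1; ring
    rw [this]; ring
  calc ∑' k : ℕ, ENNReal.ofReal (x * Real.exp (-(x * (s * (k + 1)))))
      = ∑' k : ℕ, ENNReal.ofReal (x * q ^ (k + 1)) := by
        congr 1; ext k; rw [hterm]
    _ = ENNReal.ofReal (x * q / (1 - q)) := by
        rw [← ENNReal.ofReal_tsum_of_nonneg (fun k => by positivity) hsummable, htsum]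
    _ = _ := by rw [mul_div_assoc]

lemma st17_geom2 {M s : ℝ} (hM : 0 < M) (hs : 0 < s) :
    ∑' j : ℕ, ENNReal.ofReal ((((j : ℝ) + 1) * M) * Real.exp (-((((j : ℝ) + 1) * M) * s))) =
      ENNReal.ofReal (M * (Real.exp (-(M * s)) / (1 - Real.exp (-(M * s))) ^ 2)) := by
  set q : ℝ := Real.exp (-(M * s)) with hq
  have hq0 : 0 < q := Real.exp_pos _
  have hq1 : q < 1 := by rw [hq, Real.exp_lt_one_iff]; nlinarith
  have hqnorm : ‖q‖ < 1 := by rw [Real.norm_eq_abs, abs_of_nonneg hq0.le]; exact hq1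
  have hterm : ∀ j : ℕ, (((j : ℝ) + 1) * M) * Real.exp (-((((j : ℝ) + 1) * M) * s))
      = M * (((j : ℝ) + 1) * q ^ (j + 1)) := by
    intro j
    rw [hq, ← Real.exp_nat_mul]
    push_cast
    ring_nf
  have hsum0 : Summable fun i : ℕ => (i : ℝ) * q ^ i :=
    (hasSum_coe_mul_geometric_of_norm_lt_one hqnorm).summable
  have htsum0 : ∑' i : ℕ, (i : ℝ) * q ^ i = q / (1 - q) ^ 2 :=
    tsum_coe_mul_geometric_of_norm_lt_one hqnorm
  have hsum1 : Summable fun j : ℕ => ((j : ℝ) + 1) * q ^ (j + 1) := by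
    refine (hsum0.comp_injective (add_left_injective 1)).congr fun j => ?_
    simp only [Function.comp_apply]
    push_cast
    ring
  have htsum1 : ∑' j : ℕ, ((j : ℝ) + 1) * q ^ (j + 1) = q / (1 - q) ^ 2 := by
    have h1 := Summable.tsum_eq_zero_add hsum0
    rw [htsum0] at h1
    simp only [Nat.cast_zero, zero_mul, pow_zero, zero_add] at h1
    rw [h1]
    exact tsum_congr fun j => by push_cast; ring
  have hsummable : Summable fun j : ℕ => M * (((j : ℝ) + 1) * q ^ (j + 1)) :=
    hsum1.mul_left M
  calc ∑' j : ℕ, ENNReal.ofReal ((((j : ℝ) + 1) * M) * Real.exp (-((((j : ℝ) + 1) * M) * s)))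
      = ∑' j : ℕ, ENNReal.ofReal (M * (((j : ℝ) + 1) * q ^ (j + 1))) := by
        congr 1; ext j; rw [hterm]
    _ = ENNReal.ofReal (∑' j : ℕ, M * (((j : ℝ) + 1) * q ^ (j + 1))) := by
        rw [ENNReal.ofReal_tsum_of_nonneg (fun j => by positivity) hsummable]
    _ = _ := by rw [tsum_mul_left, htsum1]

lemma st17_perk {M s : ℝ} (hM : 0 < M) (hs : 0 < s) :
    M * (Real.exp (-(M * s)) / (1 - Real.exp (-(M * s))) ^ 2) ≤ 1 / M * (1 / s ^ 2) := by
  set q : ℝ := Real.exp (-(M * s)) with hq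
  have hq0 : 0 < q := Real.exp_pos _
  have hq1 : q < 1 := by rw [hq, Real.exp_lt_one_iff]; nlinarith
  have hsinh : (M * s) ^ 2 * q ≤ (1 - q) ^ 2 := by
    rw [hq, show -(M * s) = -(M * s) by rfl]
    exact st17_sinh (by positivity)
  have h1q : 0 < 1 - q := by linarith
  rw [show (1 : ℝ) / M * (1 / s ^ 2) = 1 / (M * s ^ 2) by field_simp]
  rw [mul_div_assoc']
  rw [div_le_div_iff₀ (pow_pos h1q 2) (by positivity)]
  nlinarith [hsinh]

lemma st17_basel (C : ℝ) (hC : 0 ≤ C) :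
    ∑' k : ℕ, ENNReal.ofReal (C * (1 / ((k : ℝ) + 1) ^ 2)) =
      ENNReal.ofReal (C * (Real.pi ^ 2 / 6)) := by
  have hzeta : HasSum (fun n : ℕ => (1 : ℝ) / (n : ℝ) ^ 2) (Real.pi ^ 2 / 6) := hasSum_zeta_two
  have hsummable0 : Summable fun k : ℕ => (1 : ℝ) / ((k : ℝ) + 1) ^ 2 := by
    refine (hzeta.summable.comp_injective (add_left_injective 1)).congr fun k => ?_
    simp only [Function.comp_apply]
    push_cast
    ring
  have htsum : ∑' k : ℕ, (1 : ℝ) / ((k : ℝ) + 1) ^ 2 = Real.pi ^ 2 / 6 := by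
    have h1 := Summable.tsum_eq_zero_add hzeta.summable
    rw [hzeta.tsum_eq] at h1
    simp only [Nat.cast_zero] at h1
    norm_num at h1
    rw [h1]
    exact tsum_congr fun k => by rw [one_div]
  rw [← ENNReal.ofReal_tsum_of_nonneg (fun k => by positivity)
      ((hsummable0).mul_left C), tsum_mul_left, htsum]

open ENNReal in
theorem stmt_17 (m : ℕ) (hm : 0 < m) (R : Finset ℕ) (hR : R ⊆ Finset.range m)
    (hRne : R.Nonempty) (Aplus : Set ℕ) (hA : Aplus = {a : ℕ | m ≤ a ∧ a % m ∈ R})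
    (c : ℝ) (hc : c = Real.pi * Real.sqrt (2 * R.card / (3 * m))) (n : ℕ) (hn : 0 < n) :
    ∑' k : ℕ, ∑' a : Aplus,
        ((a : ℕ) : ℝ) * Real.exp (-((a : ℕ) : ℝ) * c * (k + 1) / (2 * Real.sqrt n)) ≤ n := by
  classical
  have hcard : 0 < R.card := hRne.card_pos
  have hmR : (0 : ℝ) < (m : ℝ) := by exact_mod_cast hm
  have hnR : (0 : ℝ) < (n : ℝ) := by exact_mod_cast hn
  have hcardR : (0 : ℝ) < (R.card : ℝ) := by exact_mod_cast hcard
  have hsq : (0 : ℝ) < Real.sqrt n := Real.sqrt_pos.mpr hnR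
  have harg : (0 : ℝ) < 2 * R.card / (3 * m) := by positivity
  have hcpos : 0 < c := by rw [hc]; exact mul_pos Real.pi_pos (Real.sqrt_pos.mpr harg)
  set t : ℝ := c / (2 * Real.sqrt n) with htdef
  have htpos : 0 < t := div_pos hcpos (by positivity)
  set M : ℝ := (m : ℝ) with hMdef
  have harith : (R.card : ℝ) * (1 / (M * t ^ 2) * (Real.pi ^ 2 / 6)) = (n : ℝ) := by
    have ht2 : t ^ 2 = c ^ 2 / (4 * n) := by
      rw [htdef, div_pow, mul_pow, Real.sq_sqrt hnR.le]
      norm_num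
    have hc2 : c ^ 2 = Real.pi ^ 2 * (2 * R.card / (3 * M)) := by
      rw [hc, mul_pow, Real.sq_sqrt harg.le, hMdef]
    rw [ht2, hc2]
    have hpi := Real.pi_ne_zero
    field_simp
    ring
  -- the common term, rewritten
  set g : ℕ → ℕ → ℝ := fun k a => (a : ℝ) * Real.exp (-((a : ℝ) * (t * ((k : ℝ) + 1))))
    with hgdef
  have hexp : ∀ a k : ℕ,
      (a : ℝ) * Real.exp (-(a : ℝ) * c * ((k : ℝ) + 1) / (2 * Real.sqrt n)) = g k a := by
    intro a k
    rw [hgdef]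
    congr 1
    rw [htdef]
    field_simp
  set G : ℕ → ℕ → ℝ≥0∞ := fun k a => ENNReal.ofReal (g k a) with hGdef
  have hgnn : ∀ k a : ℕ, 0 ≤ g k a := by
    intro k a; rw [hgdef]; positivity
  -- the per-residue bound
  have perR : ∀ r : ℕ, (∑' j : ℕ, ∑' k : ℕ, G k (r + (j + 1) * m)) ≤
      ENNReal.ofReal (1 / (M * t ^ 2) * (Real.pi ^ 2 / 6)) := by
    intro r
    have hApos : ∀ j : ℕ, (0 : ℝ) < ((r + (j + 1) * m : ℕ) : ℝ) := by
      intro j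
      have : 0 < r + (j + 1) * m := by positivity
      exact_mod_cast this
    have hBpos : ∀ j : ℕ, (0 : ℝ) < ((j : ℝ) + 1) * M := by intro j; positivity
    have hBA : ∀ j : ℕ, ((j : ℝ) + 1) * M ≤ ((r + (j + 1) * m : ℕ) : ℝ) := by
      intro j; push_cast; nlinarith [Nat.cast_nonneg (α := ℝ) r]
    calc ∑' j : ℕ, ∑' k : ℕ, G k (r + (j + 1) * m)
        = ∑' j : ℕ, ENNReal.ofReal
            (((r + (j + 1) * m : ℕ) : ℝ) * Real.exp (-(((r + (j + 1) * m : ℕ) : ℝ) * t)) /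
              (1 - Real.exp (-(((r + (j + 1) * m : ℕ) : ℝ) * t)))) := by
          refine tsum_congr fun j => ?_
          exact st17_geom (hApos j) htpos
      _ ≤ ∑' j : ℕ, ENNReal.ofReal
            ((((j : ℝ) + 1) * M) * Real.exp (-((((j : ℝ) + 1) * M) * t)) /
              (1 - Real.exp (-((((j : ℝ) + 1) * M) * t)))) := by
          refine ENNReal.tsum_le_tsum fun j => ?_
          exact ENNReal.ofReal_le_ofReal (st17_mono htpos (hBpos j) (hBA j))
      _ = ∑' j : ℕ, ∑' k : ℕ, ENNReal.ofReal
            ((((j : ℝ) + 1) * M) * Real.exp (-((((j : ℝ) + 1) * M) * (t * ((k : ℝ) + 1))))) := by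
          refine tsum_congr fun j => ?_
          exact (st17_geom (hBpos j) htpos).symm
      _ = ∑' k : ℕ, ∑' j : ℕ, ENNReal.ofReal
            ((((j : ℝ) + 1) * M) * Real.exp (-((((j : ℝ) + 1) * M) * (t * ((k : ℝ) + 1))))) :=
          ENNReal.tsum_comm
      _ = ∑' k : ℕ, ENNReal.ofReal
            (M * (Real.exp (-(M * (t * ((k : ℝ) + 1)))) /
              (1 - Real.exp (-(M * (t * ((k : ℝ) + 1))))) ^ 2)) := by
          refine tsum_congr fun k => ?_
          exact st17_geom2 hmR (by positivity)
      _ ≤ ∑' k : ℕ, ENNReal.ofReal (1 / (M * t ^ 2) * (1 / ((k : ℝ) + 1) ^ 2)) := by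
          refine ENNReal.tsum_le_tsum fun k => ?_
          refine ENNReal.ofReal_le_ofReal ?_
          refine le_trans (st17_perk hmR (show (0:ℝ) < t * ((k : ℝ) + 1) by positivity)) ?_
          rw [mul_pow]
          rw [one_div, one_div, one_div, one_div, ← mul_inv, ← mul_inv]
          ring_nf
          exact le_refl _
      _ = ENNReal.ofReal (1 / (M * t ^ 2) * (Real.pi ^ 2 / 6)) :=
          st17_basel _ (by positivity)
  -- the ENNReal bound
  have main : (∑' k : ℕ, ∑' a : Aplus, G k a) ≤ ENNReal.ofReal n := by
    rw [ENNReal.tsum_comm]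
    have hmema' : ∀ x : ℕ, x ∈ Aplus → m ≤ x ∧ x % m ∈ R := by
      intro x hx
      rw [hA] at hx
      exact hx
    have hmema : ∀ a : Aplus, m ≤ (a : ℕ) ∧ (a : ℕ) % m ∈ R := fun a => hmema' _ a.2
    set F : ↥R × ℕ → ℝ≥0∞ := fun p => ∑' k : ℕ, G k ((p.1 : ℕ) + (p.2 + 1) * m) with hFdef
    set e : Aplus → ↥R × ℕ :=
      fun a => (⟨(a : ℕ) % m, (hmema a).2⟩, (a : ℕ) / m - 1) with hedef
    have hdiv1 : ∀ a : Aplus, 1 ≤ (a : ℕ) / m := fun a =>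
      (Nat.one_le_div_iff hm).mpr (hmema a).1
    have hrecon : ∀ a : Aplus, (a : ℕ) % m + ((a : ℕ) / m - 1 + 1) * m = (a : ℕ) := by
      intro a
      rw [Nat.sub_add_cancel (hdiv1 a), Nat.mod_add_div']
    have h_e_inj : Function.Injective e := by
      intro a b hab
      rw [hedef] at hab
      have h1 : (a : ℕ) % m = (b : ℕ) % m := by
        have := congrArg (fun p : ↥R × ℕ => (p.1 : ℕ)) hab
        simpa using this
      have h2 : (a : ℕ) / m - 1 = (b : ℕ) / m - 1 := congrArg Prod.snd hab
      have h3 : (a : ℕ) / m = (b : ℕ) / m := by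
        have := hdiv1 a; have := hdiv1 b; omega
      apply Subtype.ext
      rw [← Nat.mod_add_div' (a : ℕ) m, ← Nat.mod_add_div' (b : ℕ) m, h1, h3]
    calc ∑' (a : Aplus), ∑' k : ℕ, G k (a : ℕ)
        = ∑' (a : Aplus), F (e a) := by
          refine tsum_congr fun a => ?_
          rw [hFdef, hedef]
          exact (congrArg (fun x => ∑' k : ℕ, G k x) (hrecon a)).symm
      _ ≤ ∑' p : ↥R × ℕ, F p := ENNReal.tsum_comp_le_tsum_of_injective h_e_inj F
      _ = ∑' (r : ↥R), ∑' j : ℕ, F (r, j) := ENNReal.tsum_prod'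
      _ ≤ ∑' (r : ↥R), ENNReal.ofReal (1 / (M * t ^ 2) * (Real.pi ^ 2 / 6)) := by
          refine ENNReal.tsum_le_tsum fun r => ?_
          exact perR (r : ℕ)
      _ = R.card • ENNReal.ofReal (1 / (M * t ^ 2) * (Real.pi ^ 2 / 6)) := by
          rw [tsum_fintype, Finset.sum_const, Finset.card_univ, Fintype.card_coe]
      _ = ENNReal.ofReal n := by
          rw [nsmul_eq_mul, ← ENNReal.ofReal_natCast R.card,
            ← ENNReal.ofReal_mul hcardR.le, harith]
  -- glue back to ℝ
  have hTne : (∑' k : ℕ, ∑' a : Aplus, G k a) ≠ ⊤ :=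
    ne_top_of_le_ne_top ENNReal.ofReal_ne_top main
  have hPk_ne : ∀ k : ℕ, (∑' a : Aplus, G k (a : ℕ)) ≠ ⊤ := fun k =>
    ne_top_of_le_ne_top hTne (ENNReal.le_tsum k)
  have hP : ∀ k : ℕ, (∑' a : Aplus, g k (a : ℕ)) ≤ (∑' a : Aplus, G k (a : ℕ)).toReal := by
    intro k
    by_cases hs : Summable fun a : Aplus => g k (a : ℕ)
    · have heq : (∑' a : Aplus, G k (a : ℕ)) = ENNReal.ofReal (∑' a : Aplus, g k (a : ℕ)) := by
        rw [ENNReal.ofReal_tsum_of_nonneg (f := fun a : Aplus => g k (a : ℕ))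
          (fun a => hgnn k (a : ℕ)) hs]
      rw [heq, ENNReal.toReal_ofReal (tsum_nonneg fun a : Aplus => hgnn k (a : ℕ))]
    · rw [tsum_eq_zero_of_not_summable hs]
      exact ENNReal.toReal_nonneg
  have hsumP : Summable fun k : ℕ => (∑' a : Aplus, G k (a : ℕ)).toReal :=
    ENNReal.summable_toReal hTne
  have hsumI : Summable fun k : ℕ => ∑' a : Aplus, g k (a : ℕ) := by
    refine Summable.of_nonneg_of_le (fun k => tsum_nonneg fun a : Aplus => hgnn k (a : ℕ))
      hP hsumP
  calc ∑' k : ℕ, ∑' a : Aplus,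
        ((a : ℕ) : ℝ) * Real.exp (-((a : ℕ) : ℝ) * c * (k + 1) / (2 * Real.sqrt n))
      = ∑' k : ℕ, ∑' a : Aplus, g k (a : ℕ) := by
        refine tsum_congr fun k => tsum_congr fun a => ?_
        exact hexp (a : ℕ) k
    _ ≤ ∑' k : ℕ, (∑' a : Aplus, G k (a : ℕ)).toReal := Summable.tsum_le_tsum hP hsumI hsumP
    _ = (∑' k : ℕ, ∑' a : Aplus, G k (a : ℕ)).toReal := (ENNReal.tsum_toReal_eq hPk_ne).symm
    _ ≤ (ENNReal.ofReal n).toReal := ENNReal.toReal_mono ENNReal.ofReal_ne_top main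
    _ = n := ENNReal.toReal_ofReal hnR.le
end
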